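/- arXiv:1608.04103 — 5 statements merged into one kernel-verified Lean document; each statement's English description precedes it below -/
import Mathlib

section
/- Let Σ be an alphabet, Δ ⊆ Σ*, S ⊆ Σ* a prefix-closed supervisor language, G ⊆ Σ* a prefix-closed plant language, and {Aᵢ}ᵢ∈I a family of prefix-closed attack languages Aᵢ ⊆ (Σ×Δ)*. If for every i ∈ I and every μ ∈ L(G×(Aᵢ∘S)) one has {σ ∈ Σ : ∃ u ∈ Δ, μ·(σ,u) ∈ L(G×(Aᵢ∘S))} = {σ ∈ Σ : θ(μ)·σ ∈ S}, then for every μ ∈ L(G×((⋃ᵢ Aᵢ)∘S)) one has {σ ∈ Σ : ∃ u ∈ Δ, μ·(σ,u) ∈ L(G×((⋃ᵢ Aᵢ)∘S))} = {σ ∈ Σ : θ(μ)·σ ∈ S}. -/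
namespace Stmt6

variable {α : Type*}

/-- Prefix closure: pr(L) := {s : ∃ t ∈ L, s is a prefix of t}. -/
def pr {β : Type*} (L : Set (List β)) : Set (List β) := {s | ∃ t ∈ L, s <+: t}

/-- Input map ψ : (Σ×Δ)* → Σ*, sending each letter (σ,u) to the one-letter word σ. -/
def psi (μ : List (α × List α)) : List α := μ.map Prod.fst

/-- Output map θ : (Σ×Δ)* → Σ*, sending each letter (σ,u) to the word u. -/
def theta (μ : List (α × List α)) : List α := (μ.map Prod.snd).flatten

/-- L(A∘S) := {μ ∈ A : θ(μ) ∈ S}. -/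
def compLang (A : Set (List (α × List α))) (S : Set (List α)) : Set (List (α × List α)) :=
  {μ | μ ∈ A ∧ theta μ ∈ S}

/-- L(G×(A∘S)) := {μ ∈ A : θ(μ) ∈ S ∧ ψ(μ) ∈ G}. -/
def closedLoop (G : Set (List α)) (A : Set (List (α × List α))) (S : Set (List α)) :
    Set (List (α × List α)) :=
  {μ | μ ∈ A ∧ theta μ ∈ S ∧ psi μ ∈ G}

/-- if every attack Aᵢ of a family of prefix-closed attacks satisfies
the control-feasibility property (the events enabled after μ in the attacked closed
loop coincide with the events enabled by the supervisor after θ(μ)), then so does the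
union ⋃ᵢ Aᵢ. -/
theorem stmt6 {I : Type*} (Δ : Set (List α)) (S G : Set (List α))
    (hS : pr S = S) (hG : pr G = G)
    (A : I → Set (List (α × List α)))
    (hAΔ : ∀ i, ∀ μ ∈ A i, ∀ p ∈ μ, p.2 ∈ Δ)
    (hApc : ∀ i, pr (A i) = A i)
    (hcf : ∀ i, ∀ μ ∈ closedLoop G (A i) S,
      {σ : α | ∃ u ∈ Δ, μ ++ [(σ, u)] ∈ closedLoop G (A i) S} =
      {σ : α | theta μ ++ [σ] ∈ S}) :
    ∀ μ ∈ closedLoop G (⋃ i, A i) S,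
      {σ : α | ∃ u ∈ Δ, μ ++ [(σ, u)] ∈ closedLoop G (⋃ i, A i) S} =
      {σ : α | theta μ ++ [σ] ∈ S} := by
  intro μ hμ
  ext σ
  simp only [Set.mem_setOf_eq]
  constructor
  · rintro ⟨u, huΔ, hj, hθ, hψ⟩
    obtain ⟨Aj, ⟨j, rfl⟩, hjA⟩ := hj
    have hμj : μ ∈ closedLoop G (A j) S := by
      refine ⟨?_, ?_, ?_⟩
      · rw [← hApc j]; exact ⟨μ ++ [(σ, u)], hjA, List.prefix_append _ _⟩
      · rw [← hS]
        refine ⟨theta (μ ++ [(σ, u)]), hθ, ?_⟩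
        simp [theta, List.prefix_append]
      · rw [← hG]
        refine ⟨psi (μ ++ [(σ, u)]), hψ, ?_⟩
        simp [psi, List.prefix_append]
    have := (hcf j μ hμj).ge
    have hmem : σ ∈ {σ : α | ∃ u ∈ Δ, μ ++ [(σ, u)] ∈ closedLoop G (A j) S} :=
      ⟨u, huΔ, hjA, hθ, hψ⟩
    rw [hcf j μ hμj] at hmem
    exact hmem
  · intro hσ
    obtain ⟨hμA, hθ, hψ⟩ := hμ
    obtain ⟨Ai, ⟨i, rfl⟩, hiA⟩ := hμA
    have hμi : μ ∈ closedLoop G (A i) S := ⟨hiA, hθ, hψ⟩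
    have : σ ∈ {σ : α | ∃ u ∈ Δ, μ ++ [(σ, u)] ∈ closedLoop G (A i) S} := by
      rw [hcf i μ hμi]; exact hσ
    obtain ⟨u, huΔ, hA, hθ', hψ'⟩ := this
    exact ⟨u, huΔ, Set.mem_iUnion.2 ⟨i, hA⟩, hθ', hψ'⟩

end Stmt6
end

section
/- Let Σ be an alphabet, Σo ⊆ Σ, Δ ⊆ Σ*, S ⊆ Σ* a prefix-closed supervisor language, G ⊆ Σ* a prefix-closed plant language, B ⊆ Σ* a bad-behavior language, and {Aᵢ}ᵢ∈I a family of prefix-closed attack languages each of which satisfies the four ABSRA properties (covertness, damage infliction, normality, control feasibility) with respect to (G, S, B, P). Then the union ⋃ᵢ Aᵢ also satisfies all four ABSRA properties with respect to (G, S, B, P). -/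
namespace Stmt7

variable {α : Type*}

/-- Prefix closure: pr(L) := {s : ∃ t ∈ L, s is a prefix of t}. -/
def pr {β : Type*} (L : Set (List β)) : Set (List β) := {s | ∃ t ∈ L, s <+: t}

-- Natural projection P : Σ* → Λo*, erasing letters not in Λo. 
open Classical in
noncomputable def natProj {β : Type*} (Λo : Set β) (s : List β) : List β :=
  s.filter (fun a => decide (a ∈ Λo))

/-- Input map ψ : (Σ×Δ)* → Σ*, sending each letter (σ,u) to the one-letter word σ. -/
def psi (μ : List (α × List α)) : List α := μ.map Prod.fst

/-- Output map θ : (Σ×Δ)* → Σ*, sending each letter (σ,u) to the word u. -/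
def theta (μ : List (α × List α)) : List α := (μ.map Prod.snd).flatten

/-- L(A∘S) := {μ ∈ A : θ(μ) ∈ S}. -/
def compLang (A : Set (List (α × List α))) (S : Set (List α)) : Set (List (α × List α)) :=
  {μ | μ ∈ A ∧ theta μ ∈ S}

/-- L(G×(A∘S)) := {μ ∈ A : θ(μ) ∈ S ∧ ψ(μ) ∈ G}. -/
def closedLoop (G : Set (List α)) (A : Set (List (α × List α))) (S : Set (List α)) :
    Set (List (α × List α)) :=
  {μ | μ ∈ A ∧ theta μ ∈ S ∧ psi μ ∈ G}

/-- The four ABSRA properties of an attack language A w.r.t. (G, S, B, P):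
(1) covertness, (2) damage infliction, (3) normality, (4) control feasibility. -/
def ABSRA (Δ : Set (List α)) (Λo : Set α) (G S B : Set (List α))
    (A : Set (List (α × List α))) : Prop :=
  theta '' A ⊆ S ∧
  psi '' closedLoop G A S = pr (psi '' compLang A S ∩ B) ∧
  natProj Λo ⁻¹' (natProj Λo '' (psi '' closedLoop G A S)) ∩ G =
    psi '' closedLoop G A S ∧
  ∀ μ ∈ closedLoop G A S,
    {σ : α | ∃ u ∈ Δ, μ ++ [(σ, u)] ∈ closedLoop G A S} =
    {σ : α | theta μ ++ [σ] ∈ S}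

/-- if every member of a family of prefix-closed attack languages
satisfies the four ABSRA properties w.r.t. (G, S, B, P), then so does the union. -/
theorem stmt7 {I : Type*} (Λo : Set α) (Δ : Set (List α)) (S G B : Set (List α))
    (hS : pr S = S) (hG : pr G = G)
    (A : I → Set (List (α × List α)))
    (hAΔ : ∀ i, ∀ μ ∈ A i, ∀ p ∈ μ, p.2 ∈ Δ)
    (hApc : ∀ i, pr (A i) = A i)
    (habsra : ∀ i, ABSRA Δ Λo G S B (A i)) :
    ABSRA Δ Λo G S B (⋃ i, A i) := by
  have hcl : closedLoop G (⋃ i, A i) S = ⋃ i, closedLoop G (A i) S := by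
    ext μ; simp only [closedLoop, Set.mem_iUnion, Set.mem_setOf_eq]; tauto
  have hcomp : compLang (⋃ i, A i) S = ⋃ i, compLang (A i) S := by
    ext μ; simp only [compLang, Set.mem_iUnion, Set.mem_setOf_eq]; tauto
  have hpr : ∀ (L : I → Set (List α)), pr (⋃ i, L i) = ⋃ i, pr (L i) := by
    intro L; ext s; simp only [pr, Set.mem_iUnion, Set.mem_setOf_eq]; tauto
  refine ⟨?_, ?_, ?_, ?_⟩
  · rintro x ⟨μ, hμ, rfl⟩
    obtain ⟨i, hi⟩ := Set.mem_iUnion.mp hμ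
    exact (habsra i).1 ⟨μ, hi, rfl⟩
  · rw [hcl, hcomp, Set.image_iUnion, Set.image_iUnion, Set.iUnion_inter, hpr]
    exact Set.iUnion_congr fun i => (habsra i).2.1
  · rw [hcl, Set.image_iUnion, Set.image_iUnion, Set.preimage_iUnion, Set.iUnion_inter]
    exact Set.iUnion_congr fun i => (habsra i).2.2.1
  · intro μ hμ
    rw [hcl] at hμ
    obtain ⟨i, hi⟩ := Set.mem_iUnion.mp hμ
    ext σ
    simp only [Set.mem_setOf_eq]
    constructor
    · rintro ⟨u, hu, hmem⟩
      rw [hcl] at hmem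
      obtain ⟨j, hj⟩ := Set.mem_iUnion.mp hmem
      have hAj : μ ∈ A j := by
        rw [← hApc j]; exact ⟨_, hj.1, List.prefix_append _ _⟩
      have hθ : theta μ ∈ S := by
        rw [← hS]; exact ⟨theta (μ ++ [(σ, u)]), hj.2.1, ⟨u, by simp [theta]⟩⟩
      have hψ : psi μ ∈ G := by
        rw [← hG]; exact ⟨psi (μ ++ [(σ, u)]), hj.2.2, ⟨[σ], by simp [psi]⟩⟩
      have key := (habsra j).2.2.2 μ ⟨hAj, hθ, hψ⟩
      exact (Set.ext_iff.mp key σ).mp ⟨u, hu, hj⟩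
    · intro hσ
      have key := (habsra i).2.2.2 μ hi
      obtain ⟨u, hu, hmem⟩ := (Set.ext_iff.mp key σ).mpr hσ
      exact ⟨u, hu, by rw [hcl]; exact Set.mem_iUnion.mpr ⟨i, hmem⟩⟩

end Stmt7
end

section
/- Let Σ be an alphabet, Σo ⊆ Σ, Δ ⊆ Σ*, S ⊆ Σ* a prefix-closed supervisor language, G ⊆ Σ* a prefix-closed plant language, and B ⊆ Σ* a bad-behavior language. Then the collection of prefix-closed languages A ⊆ (Σ×Δ)* satisfying the four ABSRA properties with respect to (G, S, B, P) has a greatest element (with respect to set inclusion), namely the union of all members of the collection: this union is prefix-closed, satisfies the four ABSRA properties, and contains every prefix-closed language satisfying them. -/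
namespace Stmt8

variable {α : Type*}

/-- Prefix closure: pr(L) := {s : ∃ t ∈ L, s is a prefix of t}. -/
def pr {β : Type*} (L : Set (List β)) : Set (List β) := {s | ∃ t ∈ L, s <+: t}

-- Natural projection P : Σ* → Λo*, erasing letters not in Λo. 
open Classical in
noncomputable def natProj {β : Type*} (Λo : Set β) (s : List β) : List β :=
  s.filter (fun a => decide (a ∈ Λo))

/-- Input map ψ : (Σ×Δ)* → Σ*, sending each letter (σ,u) to the one-letter word σ. -/
def psi (μ : List (α × List α)) : List α := μ.map Prod.fst

/-- Output map θ : (Σ×Δ)* → Σ*, sending each letter (σ,u) to the word u. -/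
def theta (μ : List (α × List α)) : List α := (μ.map Prod.snd).flatten

/-- L(A∘S) := {μ ∈ A : θ(μ) ∈ S}. -/
def compLang (A : Set (List (α × List α))) (S : Set (List α)) : Set (List (α × List α)) :=
  {μ | μ ∈ A ∧ theta μ ∈ S}

/-- L(G×(A∘S)) := {μ ∈ A : θ(μ) ∈ S ∧ ψ(μ) ∈ G}. -/
def closedLoop (G : Set (List α)) (A : Set (List (α × List α))) (S : Set (List α)) :
    Set (List (α × List α)) :=
  {μ | μ ∈ A ∧ theta μ ∈ S ∧ psi μ ∈ G}

/-- The four ABSRA properties of an attack language A w.r.t. (G, S, B, P):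
(1) covertness, (2) damage infliction, (3) normality, (4) control feasibility. -/
def ABSRA (Δ : Set (List α)) (Λo : Set α) (G S B : Set (List α))
    (A : Set (List (α × List α))) : Prop :=
  theta '' A ⊆ S ∧
  psi '' closedLoop G A S = pr (psi '' compLang A S ∩ B) ∧
  natProj Λo ⁻¹' (natProj Λo '' (psi '' closedLoop G A S)) ∩ G =
    psi '' closedLoop G A S ∧
  ∀ μ ∈ closedLoop G A S,
    {σ : α | ∃ u ∈ Δ, μ ++ [(σ, u)] ∈ closedLoop G A S} =
    {σ : α | theta μ ++ [σ] ∈ S}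

lemma theta_append (μ ν : List (α × List α)) : theta (μ ++ ν) = theta μ ++ theta ν := by
  simp [theta]

lemma psi_append (μ ν : List (α × List α)) : psi (μ ++ ν) = psi μ ++ psi ν := by
  simp [psi]

lemma closedLoop_prefix {G S : Set (List α)} {A : Set (List (α × List α))}
    (hS : pr S = S) (hG : pr G = G) (hA : pr A = A)
    {μ ν : List (α × List α)} (h : μ ++ ν ∈ closedLoop G A S) :
    μ ∈ closedLoop G A S := by
  obtain ⟨h1, h2, h3⟩ := h
  refine ⟨?_, ?_, ?_⟩
  · rw [← hA]; exact ⟨μ ++ ν, h1, List.prefix_append μ ν⟩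
  · rw [← hS]
    exact ⟨theta (μ ++ ν), h2, by rw [theta_append]; exact List.prefix_append _ _⟩
  · rw [← hG]
    exact ⟨psi (μ ++ ν), h3, by rw [psi_append]; exact List.prefix_append _ _⟩

/-- the collection of prefix-closed attack languages A ⊆ (Σ×Δ)*
satisfying the four ABSRA properties has a greatest element, namely the union of all
its members: the union is itself a member of the collection (prefix-closed, over the
alphabet Σ×Δ, and satisfying the four ABSRA properties) and contains every member. -/
theorem stmt8 (Λo : Set α) (Δ : Set (List α)) (S G B : Set (List α))
    (hS : pr S = S) (hG : pr G = G) :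
    let 𝒜 : Set (Set (List (α × List α))) :=
      {A | (∀ μ ∈ A, ∀ p ∈ μ, p.2 ∈ Δ) ∧ pr A = A ∧ ABSRA Δ Λo G S B A}
    ⋃₀ 𝒜 ∈ 𝒜 ∧ ∀ A ∈ 𝒜, A ⊆ ⋃₀ 𝒜 := by
  intro 𝒜
  have hsub : ∀ A ∈ 𝒜, A ⊆ ⋃₀ 𝒜 := fun A hA μ hμ => ⟨A, hA, hμ⟩
  -- closedLoop inclusion
  have hclsub : ∀ A ∈ 𝒜, closedLoop G A S ⊆ closedLoop G (⋃₀ 𝒜) S := by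
    rintro A hA μ ⟨h1, h2, h3⟩; exact ⟨⟨A, hA, h1⟩, h2, h3⟩
  refine ⟨⟨?_, ?_, ?_, ?_, ?_, ?_⟩, hsub⟩
  · -- letters
    rintro μ ⟨A, hA, hμ⟩ p hp
    exact hA.1 μ hμ p hp
  · -- prefix closed
    apply Set.Subset.antisymm
    · rintro s ⟨t, ⟨A, hA, htA⟩, hpre⟩
      exact ⟨A, hA, hA.2.1 ▸ ⟨t, htA, hpre⟩⟩
    · intro s hs; exact ⟨s, hs, List.prefix_refl s⟩
  · -- covertness
    rintro s ⟨μ, ⟨A, hA, hμ⟩, rfl⟩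
    exact hA.2.2.1 ⟨μ, hμ, rfl⟩
  · -- damage infliction
    ext s
    constructor
    · rintro ⟨μ, ⟨⟨A, hA, hμA⟩, h2, h3⟩, rfl⟩
      have : psi μ ∈ pr (psi '' compLang A S ∩ B) := by
        rw [← hA.2.2.2.1]; exact ⟨μ, ⟨hμA, h2, h3⟩, rfl⟩
      obtain ⟨t, ⟨⟨ν, ⟨hν1, hν2⟩, rfl⟩, htB⟩, hpre⟩ := this
      exact ⟨psi ν, ⟨⟨ν, ⟨⟨A, hA, hν1⟩, hν2⟩, rfl⟩, htB⟩, hpre⟩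
    · rintro ⟨t, ⟨⟨ν, ⟨⟨A, hA, hν1⟩, hν2⟩, rfl⟩, htB⟩, hpre⟩
      have : s ∈ psi '' closedLoop G A S := by
        rw [hA.2.2.2.1]
        exact ⟨psi ν, ⟨⟨ν, ⟨hν1, hν2⟩, rfl⟩, htB⟩, hpre⟩
      obtain ⟨μ, hμ, rfl⟩ := this
      exact ⟨μ, hclsub A hA hμ, rfl⟩
  · -- normality
    ext g
    constructor
    · rintro ⟨⟨s, ⟨μ, ⟨⟨A, hA, hμA⟩, h2, h3⟩, rfl⟩, hPs⟩, hgG⟩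
      have : g ∈ natProj Λo ⁻¹' (natProj Λo '' (psi '' closedLoop G A S)) ∩ G :=
        ⟨⟨psi μ, ⟨μ, ⟨hμA, h2, h3⟩, rfl⟩, hPs⟩, hgG⟩
      rw [hA.2.2.2.2.1] at this
      obtain ⟨μ', hμ', rfl⟩ := this
      exact ⟨μ', hclsub A hA hμ', rfl⟩
    · rintro ⟨μ, ⟨⟨A, hA, hμA⟩, h2, h3⟩, rfl⟩
      have : psi μ ∈ natProj Λo ⁻¹' (natProj Λo '' (psi '' closedLoop G A S)) ∩ G := by
        rw [hA.2.2.2.2.1]; exact ⟨μ, ⟨hμA, h2, h3⟩, rfl⟩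
      refine ⟨?_, this.2⟩
      exact Set.mem_image_of_mem _ (Set.mem_image_of_mem _ ⟨⟨A, hA, hμA⟩, h2, h3⟩)
  · -- control feasibility
    rintro μ ⟨⟨A, hA, hμA⟩, h2, h3⟩
    ext σ
    constructor
    · rintro ⟨u, huΔ, ⟨⟨A', hA', hext⟩, he2, he3⟩⟩
      have hμA' : μ ∈ closedLoop G A' S :=
        closedLoop_prefix hS hG hA'.2.1 ⟨hext, he2, he3⟩
      have hext' : μ ++ [(σ, u)] ∈ closedLoop G A' S := ⟨hext, he2, he3⟩
      have := hA'.2.2.2.2.2 μ hμA'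
      rw [← this]
      exact ⟨u, huΔ, hext'⟩
    · intro hσ
      have hμcl : μ ∈ closedLoop G A S := ⟨hμA, h2, h3⟩
      have := hA.2.2.2.2.2 μ hμcl
      have hσ' : σ ∈ {σ : α | ∃ u ∈ Δ, μ ++ [(σ, u)] ∈ closedLoop G A S} := by
        rw [this]; exact hσ
      obtain ⟨u, huΔ, hext⟩ := hσ'
      exact ⟨u, huΔ, hclsub A hA hext⟩

end Stmt8
end

section
/- Let Λ be an alphabet, Λuc ⊆ Λ an uncontrollable sub-alphabet, and L ⊆ Λ* a language. If {Kᵢ}ᵢ∈I is a (possibly infinite) family of languages Kᵢ ⊆ Λ* such that each Kᵢ is controllable with respect to L and Λuc, i.e., pr(Kᵢ)·Λuc ∩ L ⊆ pr(Kᵢ) for every i ∈ I, then the union ⋃ᵢ Kᵢ is controllable with respect to L and Λuc: pr(⋃ᵢ Kᵢ)·Λuc ∩ L ⊆ pr(⋃ᵢ Kᵢ). -/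
namespace Stmt10

/-- Prefix closure: pr(K) := {s : ∃ t ∈ K, s is a prefix of t}. -/
def pr {β : Type*} (K : Set (List β)) : Set (List β) := {s | ∃ t ∈ K, s <+: t}

/-- K·Λuc := {sσ : s ∈ K, σ ∈ Λuc}: each word of K extended by one uncontrollable
letter. -/
def extUc {β : Type*} (K : Set (List β)) (Λuc : Set β) : Set (List β) :=
  {t | ∃ s ∈ K, ∃ σ ∈ Λuc, t = s ++ [σ]}

/-- controllability is closed under (possibly infinite) unions:
if pr(Kᵢ)·Λuc ∩ L ⊆ pr(Kᵢ) for every i, then pr(⋃ᵢ Kᵢ)·Λuc ∩ L ⊆ pr(⋃ᵢ Kᵢ). -/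
theorem stmt10 {Λ I : Type*} (Λuc : Set Λ) (L : Set (List Λ))
    (K : I → Set (List Λ))
    (hctrl : ∀ i, extUc (pr (K i)) Λuc ∩ L ⊆ pr (K i)) :
    extUc (pr (⋃ i, K i)) Λuc ∩ L ⊆ pr (⋃ i, K i) := by
  rintro x ⟨⟨s, ⟨t, ht, hst⟩, σ, hσ, rfl⟩, hL⟩
  simp only [Set.mem_iUnion] at ht
  obtain ⟨i, hi⟩ := ht
  have : s ++ [σ] ∈ pr (K i) := hctrl i ⟨⟨s, ⟨t, hi, hst⟩, σ, hσ, rfl⟩, hL⟩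
  obtain ⟨u, hu, hpre⟩ := this
  exact ⟨u, Set.mem_iUnion.2 ⟨i, hu⟩, hpre⟩

end Stmt10
end

section
/- Let Λ be an alphabet, Λuc ⊆ Λ, Λo ⊆ Λ, P : Λ* → Λo* the natural projection, L ⊆ Λ* a language, M ⊆ Λ* a marked language, and E ⊆ Λ* a requirement. Define CN(M, E) as the collection of all K ⊆ M ∩ E such that K is controllable with respect to L and Λuc and pr(K) is normal with respect to L and Λo. Then the union sup CN(M, E) := ⋃{K : K ∈ CN(M, E)} is itself a member of CN(M, E), and K ⊆ sup CN(M, E) for every K ∈ CN(M, E); i.e., the supremal controllable and normal sublanguage exists. -/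
namespace Stmt11

/-- Prefix closure: pr(K) := {s : ∃ t ∈ K, s is a prefix of t}. -/
def pr {β : Type*} (K : Set (List β)) : Set (List β) := {s | ∃ t ∈ K, s <+: t}

-- Natural projection P : Λ* → Λo*, erasing letters not in Λo. 
open Classical in
noncomputable def natProj {β : Type*} (Λo : Set β) (s : List β) : List β :=
  s.filter (fun a => decide (a ∈ Λo))

/-- K·Λuc := {sσ : s ∈ K, σ ∈ Λuc}. -/
def extUc {β : Type*} (K : Set (List β)) (Λuc : Set β) : Set (List β) :=
  {t | ∃ s ∈ K, ∃ σ ∈ Λuc, t = s ++ [σ]}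

/-- K is controllable w.r.t. L and Λuc if pr(K)·Λuc ∩ L ⊆ pr(K). -/
def controllable {β : Type*} (K L : Set (List β)) (Λuc : Set β) : Prop :=
  extUc (pr K) Λuc ∩ L ⊆ pr K

/-- K is normal w.r.t. L and Λo if P⁻¹(P(K)) ∩ L = K. -/
def normal {β : Type*} (K L : Set (List β)) (Λo : Set β) : Prop :=
  natProj Λo ⁻¹' (natProj Λo '' K) ∩ L = K

/-- CN(M, E): all sublanguages K ⊆ M ∩ E that are controllable w.r.t. L and Λuc and
whose prefix closure is normal w.r.t. L and Λo. -/
def CN {β : Type*} (M E L : Set (List β)) (Λuc Λo : Set β) :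
    Set (Set (List β)) :=
  {K | K ⊆ M ∩ E ∧ controllable K L Λuc ∧ normal (pr K) L Λo}

lemma mem_pr_sUnion {β : Type*} {S : Set (Set (List β))} {x : List β} :
    x ∈ pr (⋃₀ S) ↔ ∃ K ∈ S, x ∈ pr K := by
  constructor
  · rintro ⟨t, ⟨K, hK, htK⟩, hx⟩; exact ⟨K, hK, t, htK, hx⟩
  · rintro ⟨K, hK, t, htK, hx⟩; exact ⟨t, ⟨K, hK, htK⟩, hx⟩

/-- the supremal controllable and normal sublanguage exists: the union
of all members of CN(M, E) is itself a member of CN(M, E) and contains every member. -/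
theorem stmt11 {Λ : Type*} (Λuc Λo : Set Λ) (L M E : Set (List Λ)) :
    ⋃₀ CN M E L Λuc Λo ∈ CN M E L Λuc Λo ∧
    ∀ K ∈ CN M E L Λuc Λo, K ⊆ ⋃₀ CN M E L Λuc Λo := by
  refine ⟨⟨?_, ?_, ?_⟩, ?_⟩
  · rintro x ⟨K, hK, hx⟩; exact hK.1 hx
  · rintro t ⟨⟨s, hs, σ, hσ, rfl⟩, htL⟩
    obtain ⟨K, hK, hsK⟩ := mem_pr_sUnion.mp hs
    have : s ++ [σ] ∈ pr K := hK.2.1 ⟨⟨s, hsK, σ, hσ, rfl⟩, htL⟩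
    exact mem_pr_sUnion.mpr ⟨K, hK, this⟩
  · ext x
    constructor
    · rintro ⟨⟨y, hy, hxy⟩, hxL⟩
      obtain ⟨K, hK, hyK⟩ := mem_pr_sUnion.mp hy
      have : x ∈ pr K := by
        rw [← hK.2.2]; exact ⟨⟨y, hyK, hxy⟩, hxL⟩
      exact mem_pr_sUnion.mpr ⟨K, hK, this⟩
    · intro hx
      obtain ⟨K, hK, hxK⟩ := mem_pr_sUnion.mp hx
      have h := hK.2.2
      rw [← h] at hxK
      obtain ⟨⟨y, hy, hxy⟩, hxL⟩ := hxK
      exact ⟨⟨y, mem_pr_sUnion.mpr ⟨K, hK, hy⟩, hxy⟩, hxL⟩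
  · intro K hK x hx; exact ⟨K, hK, hx⟩

end Stmt11
end
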